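/- arXiv:0803.3824 — 4 statements merged into one kernel-verified Lean document; each statement's English description precedes it below -/
import Mathlib

section
/- Let d ≥ 1, let k be a nonnegative integer, let γ₁ > 0, and set γ := γ₁/2. Let g : ℝ^d \ {0} → ℝ be differentiable with g(t·x) = g(x) for all t > 0 and all x ≠ 0 (positively homogeneous of degree 0), with |g(x)| ≤ M₀ and ‖fderiv g x‖ ≤ M₁ for all x on the unit sphere. Let χ : ℝ^d → ℝ be continuously differentiable with |χ(x)| ≤ M₂ and ‖fderiv χ x‖ ≤ M₃ for all x. Then the function u(x) := (log ‖x‖)^k · ‖x‖^{γ₁} · g(x) · χ(x) is differentiable on ℝ^d \ {0}, and there exists C > 0 such that ‖fderiv ℝ u x‖ ≤ C · ‖x‖^{γ−1} for all x with 0 < ‖x‖ ≤ 1. -/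
/-!
Write `u = φ(‖x‖) · h(x)` with the radial profile `φ(r) = (log r)^k r^{γ₁}` and `h = g χ`.
Homogeneity of degree zero makes `g` bounded and `‖Dg(x)‖ ≤ M₁ / ‖x‖`, so `|h| ≲ 1` and
`‖x‖ ‖Dh(x)‖ ≲ 1` on the punctured unit ball. Hence `‖Du(x)‖ ≲ |φ'(r)| + |φ(r)| / r`, and both
terms are `O(|log r|^j r^{γ₁-1})`; half of the power `r^{γ₁}` absorbs the logarithms.
-/

open Real

theorem exists_abs_log_pow_mul_rpow_le_rpow (j : ℕ) {a b : ℝ} (hab : a < b) :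
    ∃ C, ∀ r : ℝ, 0 < r → r ≤ 1 → |log r| ^ j * r ^ b ≤ C * r ^ a := by
  set t := (b - a) / (j + 1) with ht_def
  have ht : 0 < t := div_pos (sub_pos.2 hab) (by positivity)
  refine ⟨t⁻¹ ^ j, fun r hr hr1 => ?_⟩
  have hlog : |log r| * r ^ t ≤ t⁻¹ := by
    have := abs_log_mul_self_rpow_lt r t hr hr1 ht
    rw [abs_mul, abs_of_pos (rpow_pos_of_pos hr t)] at this
    simpa using this.le
  have hexp : a ≤ b - t * j := by
    have : t * (j + 1) = b - a := by rw [ht_def]; field_simp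
    nlinarith
  calc |log r| ^ j * r ^ b = (|log r| * r ^ t) ^ j * r ^ (b - t * j) := by
        rw [mul_pow, ← rpow_natCast (r ^ t), ← rpow_mul hr.le, mul_assoc, ← rpow_add hr]
        ring_nf
    _ ≤ t⁻¹ ^ j * r ^ a :=
        mul_le_mul (pow_le_pow_left₀ (by positivity) hlog j)
          (rpow_le_rpow_of_exponent_ge hr hr1 hexp) (by positivity) (by positivity)

theorem hasDerivAt_log_pow_mul_rpow (k : ℕ) (p : ℝ) {r : ℝ} (hr : 0 < r) :
    HasDerivAt (fun s => log s ^ k * s ^ p)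
      ((k * log r ^ (k - 1) + p * log r ^ k) * r ^ (p - 1)) r := by
  refine (((hasDerivAt_log hr.ne').pow k).mul
    (hasDerivAt_rpow_const (p := p) (Or.inl hr.ne'))).congr_deriv ?_
  rw [Pi.pow_apply, rpow_sub_one hr.ne']
  field_simp

theorem exists_abs_deriv_log_pow_mul_rpow_le (k : ℕ) {p : ℝ} (hp : 0 < p) :
    ∃ C, ∀ r : ℝ, 0 < r → r ≤ 1 →
      |(k * log r ^ (k - 1) + p * log r ^ k) * r ^ (p - 1)| + |log r ^ k * r ^ p| / r ≤
        C * r ^ (p / 2 - 1) := by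
  have hab : p / 2 - 1 < p - 1 := by linarith
  obtain ⟨C₀, hC₀⟩ := exists_abs_log_pow_mul_rpow_le_rpow k hab
  obtain ⟨C₁, hC₁⟩ := exists_abs_log_pow_mul_rpow_le_rpow (k - 1) hab
  refine ⟨k * C₁ + (p + 1) * C₀, fun r hr hr1 => ?_⟩
  have hrp : |r ^ p| / r = r ^ (p - 1) := by
    rw [abs_of_pos (rpow_pos_of_pos hr p), rpow_sub_one hr.ne']
  calc |(k * log r ^ (k - 1) + p * log r ^ k) * r ^ (p - 1)| + |log r ^ k * r ^ p| / r
      ≤ k * (|log r| ^ (k - 1) * r ^ (p - 1)) + (p + 1) * (|log r| ^ k * r ^ (p - 1)) := by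
        rw [abs_mul, abs_mul, mul_div_assoc, hrp, abs_of_pos (rpow_pos_of_pos hr _), abs_pow]
        have := abs_add_le (k * log r ^ (k - 1)) (p * log r ^ k)
        rw [abs_mul, abs_mul, Nat.abs_cast, abs_of_pos hp, abs_pow, abs_pow] at this
        nlinarith [rpow_pos_of_pos hr (p - 1)]
    _ ≤ k * (C₁ * r ^ (p / 2 - 1)) + (p + 1) * (C₀ * r ^ (p / 2 - 1)) :=
        add_le_add (mul_le_mul_of_nonneg_left (hC₁ r hr hr1) (by positivity))
          (mul_le_mul_of_nonneg_left (hC₀ r hr hr1) (by positivity))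
    _ = (k * C₁ + (p + 1) * C₀) * r ^ (p / 2 - 1) := by ring

section Homogeneous

variable {E F : Type*} [NormedAddCommGroup E] [NormedSpace ℝ E] [NormedAddCommGroup F]
  {g : E → F}

theorem norm_le_of_forall_smul_eq (hg : ∀ t : ℝ, 0 < t → ∀ x : E, x ≠ 0 → g (t • x) = g x)
    {M : ℝ} (hM : ∀ x : E, ‖x‖ = 1 → ‖g x‖ ≤ M) {x : E} (hx : x ≠ 0) : ‖g x‖ ≤ M := by
  rw [← hg ‖x‖⁻¹ (by positivity) x hx]
  exact hM _ (norm_smul_inv_norm hx)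

variable [NormedSpace ℝ F]

theorem fderiv_eq_smul_fderiv_smul_of_forall_smul_eq
    (hg : ∀ t : ℝ, 0 < t → ∀ x : E, x ≠ 0 → g (t • x) = g x) {t : ℝ} (ht : 0 < t) {x : E}
    (hx : x ≠ 0) : fderiv ℝ g x = t • fderiv ℝ g (t • x) := by
  have hev : (fun y => g (t • y)) =ᶠ[nhds x] g := by
    filter_upwards [isOpen_compl_singleton.mem_nhds hx] with y hy
    exact hg t ht y hy
  rw [← hev.fderiv_eq]
  exact fderiv_comp_smul t

theorem norm_mul_norm_fderiv_le_of_forall_smul_eq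
    (hg : ∀ t : ℝ, 0 < t → ∀ x : E, x ≠ 0 → g (t • x) = g x)
    {M : ℝ} (hM : ∀ x : E, ‖x‖ = 1 → ‖fderiv ℝ g x‖ ≤ M) {x : E} (hx : x ≠ 0) :
    ‖x‖ * ‖fderiv ℝ g x‖ ≤ M := by
  rw [fderiv_eq_smul_fderiv_smul_of_forall_smul_eq hg (inv_pos.2 (norm_pos_iff.2 hx)) hx,
    norm_smul, norm_inv, norm_norm, ← mul_assoc, mul_inv_cancel₀ (norm_ne_zero_iff.2 hx), one_mul]
  exact hM _ (norm_smul_inv_norm hx)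

end Homogeneous

theorem norm_fderiv_mul_le {E : Type*} [NormedAddCommGroup E] [NormedSpace ℝ E] {a b : E → ℝ}
    {x : E} (ha : DifferentiableAt ℝ a x) (hb : DifferentiableAt ℝ b x) :
    ‖fderiv ℝ (fun y => a y * b y) x‖ ≤ |a x| * ‖fderiv ℝ b x‖ + |b x| * ‖fderiv ℝ a x‖ := by
  rw [fderiv_fun_mul ha hb]
  exact (norm_add_le _ _).trans_eq (by simp only [norm_smul, Real.norm_eq_abs])

theorem norm_mul_norm_fderiv_mul_le {E : Type*} [NormedAddCommGroup E] [NormedSpace ℝ E]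
    {a b : E → ℝ} {x : E} (ha : DifferentiableAt ℝ a x) (hb : DifferentiableAt ℝ b x)
    (hx : ‖x‖ ≤ 1) {A A' B B' : ℝ} (ha₀ : |a x| ≤ A) (ha₁ : ‖x‖ * ‖fderiv ℝ a x‖ ≤ A')
    (hb₀ : |b x| ≤ B) (hb₁ : ‖fderiv ℝ b x‖ ≤ B') :
    ‖x‖ * ‖fderiv ℝ (fun y => a y * b y) x‖ ≤ A * B' + B * A' := by
  have hA : 0 ≤ A := (abs_nonneg _).trans ha₀
  have hB : 0 ≤ B := (abs_nonneg _).trans hb₀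
  calc ‖x‖ * ‖fderiv ℝ (fun y => a y * b y) x‖
      ≤ ‖x‖ * (|a x| * ‖fderiv ℝ b x‖ + |b x| * ‖fderiv ℝ a x‖) := by
        gcongr; exact norm_fderiv_mul_le ha hb
    _ = ‖x‖ * (|a x| * ‖fderiv ℝ b x‖) + |b x| * (‖x‖ * ‖fderiv ℝ a x‖) := by ring
    _ ≤ 1 * (A * B') + B * A' := by gcongr
    _ = A * B' + B * A' := by rw [one_mul]

theorem norm_fderiv_comp_norm_mul_le {E : Type*} [NormedAddCommGroup E] [InnerProductSpace ℝ E]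
    {φ : ℝ → ℝ} {φ' : ℝ} {h : E → ℝ} {x : E} (hx : x ≠ 0) (hφ : HasDerivAt φ φ' ‖x‖)
    (hh : DifferentiableAt ℝ h x) :
    ‖fderiv ℝ (fun y => φ ‖y‖ * h y) x‖ ≤ |φ'| * |h x| + |φ ‖x‖| * ‖fderiv ℝ h x‖ := by
  have hnorm : HasFDerivAt (fun y : E => ‖y‖) (fderiv ℝ (fun y : E => ‖y‖) x) x :=
    (differentiableAt_id.norm ℝ hx).hasFDerivAt
  have hu : HasFDerivAt (fun y => φ ‖y‖ * h y)
      (φ ‖x‖ • fderiv ℝ h x + h x • φ' • fderiv ℝ (fun y : E => ‖y‖) x) x :=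
    (hφ.comp_hasFDerivAt x hnorm).mul hh.hasFDerivAt
  rw [hu.fderiv]
  have hnorm_le : ‖fderiv ℝ (fun y : E => ‖y‖) x‖ ≤ 1 := by
    simpa using norm_fderiv_le_of_lipschitz ℝ (lipschitzWith_one_norm (E := E))
  calc _ ≤ ‖φ ‖x‖ • fderiv ℝ h x‖ + ‖h x • φ' • fderiv ℝ (fun y : E => ‖y‖) x‖ :=
        norm_add_le _ _
    _ ≤ |φ ‖x‖| * ‖fderiv ℝ h x‖ + |h x| * (|φ'| * 1) := by
        simp only [norm_smul, Real.norm_eq_abs]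
        gcongr
    _ = _ := by ring

theorem norm_fderiv_comp_norm_mul_le_of_bounds {E : Type*} [NormedAddCommGroup E]
    [InnerProductSpace ℝ E] {φ : ℝ → ℝ} {φ' : ℝ} {h : E → ℝ} {x : E} (hx : x ≠ 0)
    (hφ : HasDerivAt φ φ' ‖x‖) (hh : DifferentiableAt ℝ h x) {A B K : ℝ} (hA : |h x| ≤ A)
    (hB : ‖x‖ * ‖fderiv ℝ h x‖ ≤ B) (hK : |φ'| + |φ ‖x‖| / ‖x‖ ≤ K) :
    ‖fderiv ℝ (fun y => φ ‖y‖ * h y) x‖ ≤ K * (A + B) := by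
  have hx0 : 0 < ‖x‖ := norm_pos_iff.2 hx
  have hA0 : 0 ≤ A := (abs_nonneg _).trans hA
  have hB0 : 0 ≤ B := (by positivity : (0 : ℝ) ≤ _).trans hB
  have hφ0 : 0 ≤ |φ ‖x‖| / ‖x‖ := by positivity
  calc ‖fderiv ℝ (fun y => φ ‖y‖ * h y) x‖
      ≤ |φ'| * |h x| + |φ ‖x‖| / ‖x‖ * (‖x‖ * ‖fderiv ℝ h x‖) := by
        rw [← mul_assoc, div_mul_cancel₀ _ hx0.ne']
        exact norm_fderiv_comp_norm_mul_le hx hφ hh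
    _ ≤ |φ'| * A + |φ ‖x‖| / ‖x‖ * B := by gcongr
    _ ≤ (|φ'| + |φ ‖x‖| / ‖x‖) * (A + B) := by
        nlinarith [mul_nonneg (abs_nonneg φ') hB0, mul_nonneg hφ0 hA0]
    _ ≤ K * (A + B) := by gcongr

theorem stmt_3_general (d : ℕ) (k : ℕ) (γ₁ : ℝ) (hγ₁ : 0 < γ₁)
    (γ : ℝ) (hγ : γ = γ₁ / 2)
    (g : EuclideanSpace ℝ (Fin d) → ℝ)
    (hgdiff : ∀ x : EuclideanSpace ℝ (Fin d), x ≠ 0 → DifferentiableAt ℝ g x)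
    (hghom : ∀ t : ℝ, 0 < t → ∀ x : EuclideanSpace ℝ (Fin d), x ≠ 0 → g (t • x) = g x)
    (M₀ M₁ : ℝ)
    (hg0 : ∀ x : EuclideanSpace ℝ (Fin d), ‖x‖ = 1 → |g x| ≤ M₀)
    (hg1 : ∀ x : EuclideanSpace ℝ (Fin d), ‖x‖ = 1 → ‖fderiv ℝ g x‖ ≤ M₁)
    (χ : EuclideanSpace ℝ (Fin d) → ℝ) (hχ : ContDiff ℝ 1 χ)
    (M₂ M₃ : ℝ)
    (hχ0 : ∀ x, |χ x| ≤ M₂) (hχ1 : ∀ x, ‖fderiv ℝ χ x‖ ≤ M₃)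
    (u : EuclideanSpace ℝ (Fin d) → ℝ)
    (hu : ∀ x, u x = (Real.log ‖x‖) ^ k * ‖x‖ ^ γ₁ * g x * χ x) :
    (∀ x : EuclideanSpace ℝ (Fin d), x ≠ 0 → DifferentiableAt ℝ u x) ∧
    ∃ C : ℝ, 0 < C ∧ ∀ x : EuclideanSpace ℝ (Fin d), 0 < ‖x‖ → ‖x‖ ≤ 1 →
      ‖fderiv ℝ u x‖ ≤ C * ‖x‖ ^ (γ - 1) := by
  have hu' : u = fun x => log ‖x‖ ^ k * ‖x‖ ^ γ₁ * (g x * χ x) :=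
    funext fun x => by rw [hu, mul_assoc]
  subst hu' hγ
  have hφ (x : EuclideanSpace ℝ (Fin d)) (hx : x ≠ 0) :=
    hasDerivAt_log_pow_mul_rpow k γ₁ (norm_pos_iff.2 hx)
  have hχd : Differentiable ℝ χ := hχ.differentiable one_ne_zero
  have hh (x : EuclideanSpace ℝ (Fin d)) (hx : x ≠ 0) :
      DifferentiableAt ℝ (fun y => g y * χ y) x :=
    (hgdiff x hx).mul (hχd x)
  refine ⟨fun x hx => ((hφ x hx).differentiableAt.comp x
    (differentiableAt_id.norm ℝ hx)).mul (hh x hx), ?_⟩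
  obtain ⟨C, hC⟩ := exists_abs_deriv_log_pow_mul_rpow_le k hγ₁
  refine ⟨max (C * (M₀ * M₂ + (M₀ * M₃ + M₂ * M₁))) 1, by positivity, fun x hx0 hx1 => ?_⟩
  have hx : x ≠ 0 := norm_pos_iff.1 hx0
  have hg : |g x| ≤ M₀ := by
    simpa using norm_le_of_forall_smul_eq hghom (by simpa using hg0) hx
  have hA : |g x * χ x| ≤ M₀ * M₂ := by
    rw [abs_mul]; exact mul_le_mul hg (hχ0 x) (abs_nonneg _) ((abs_nonneg _).trans hg)
  have hB := norm_mul_norm_fderiv_mul_le (hgdiff x hx) (hχd x) hx1 hg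
    (norm_mul_norm_fderiv_le_of_forall_smul_eq hghom hg1 hx) (hχ0 x) (hχ1 x)
  refine (norm_fderiv_comp_norm_mul_le_of_bounds hx (hφ x hx) (hh x hx) hA hB
    (hC _ hx0 hx1)).trans ?_
  rw [mul_right_comm]
  gcongr
  exact le_max_left _ _

/-- Second bound of (C-singamma): the singular term
`u = (log ‖x‖)^k ‖x‖^{γ₁} g(x) χ(x)`, with degree-zero positively homogeneous angular
factor `g` of class `W¹_∞` and a `C¹` cutoff `χ`, is differentiable away from the origin
and its derivative satisfies `‖Du(x)‖ ≤ C ‖x‖^{γ-1}` for `0 < ‖x‖ ≤ 1`, where `γ = γ₁/2`. -/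
theorem stmt_3 (d : ℕ) (hd : 1 ≤ d) (k : ℕ) (γ₁ : ℝ) (hγ₁ : 0 < γ₁)
    (γ : ℝ) (hγ : γ = γ₁ / 2)
    (g : EuclideanSpace ℝ (Fin d) → ℝ)
    (hgdiff : ∀ x : EuclideanSpace ℝ (Fin d), x ≠ 0 → DifferentiableAt ℝ g x)
    (hghom : ∀ t : ℝ, 0 < t → ∀ x : EuclideanSpace ℝ (Fin d), x ≠ 0 → g (t • x) = g x)
    (M₀ M₁ : ℝ)
    (hg0 : ∀ x : EuclideanSpace ℝ (Fin d), ‖x‖ = 1 → |g x| ≤ M₀)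
    (hg1 : ∀ x : EuclideanSpace ℝ (Fin d), ‖x‖ = 1 → ‖fderiv ℝ g x‖ ≤ M₁)
    (χ : EuclideanSpace ℝ (Fin d) → ℝ) (hχ : ContDiff ℝ 1 χ)
    (M₂ M₃ : ℝ)
    (hχ0 : ∀ x, |χ x| ≤ M₂) (hχ1 : ∀ x, ‖fderiv ℝ χ x‖ ≤ M₃)
    (u : EuclideanSpace ℝ (Fin d) → ℝ)
    (hu : ∀ x, u x = (Real.log ‖x‖) ^ k * ‖x‖ ^ γ₁ * g x * χ x) :
    (∀ x : EuclideanSpace ℝ (Fin d), x ≠ 0 → DifferentiableAt ℝ u x) ∧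
    ∃ C : ℝ, 0 < C ∧ ∀ x : EuclideanSpace ℝ (Fin d), 0 < ‖x‖ → ‖x‖ ≤ 1 →
      ‖fderiv ℝ u x‖ ≤ C * ‖x‖ ^ (γ - 1) :=
  stmt_3_general d k γ₁ hγ₁ γ hγ g hgdiff hghom M₀ M₁ hg0 hg1 χ hχ M₂ M₃ hχ0 hχ1 u hu
end

section
/- Let d ≥ 1, let k be a nonnegative integer, let γ₁ > 0, set γ := γ₁/2, and let m be a nonnegative integer. The function u(x) := (log ‖x‖)^k · ‖x‖^{γ₁}, defined for x ∈ ℝ^d with x ≠ 0, is infinitely differentiable on ℝ^d \ {0}, and there exists a constant C > 0 such that ‖iteratedFDeriv ℝ m u x‖ ≤ C · ‖x‖^{γ−m} for all x with 0 < ‖x‖ ≤ 1. -/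
open Real Set Finset Filter

/-- Scaling by a nonzero scalar as a continuous linear equivalence. -/
noncomputable def sCLE {E : Type*} [NormedAddCommGroup E] [NormedSpace ℝ E]
    {t : ℝ} (ht : t ≠ 0) : E ≃L[ℝ] E where
  toFun := fun z => t • z
  invFun := fun z => t⁻¹ • z
  map_add' := fun a b => smul_add t a b
  map_smul' := fun c z => smul_comm t c z
  left_inv := fun z => by
    show t⁻¹ • t • z = z
    rw [smul_smul, inv_mul_cancel₀ ht, one_smul]
  right_inv := fun z => by
    show t • t⁻¹ • z = z
    rw [smul_smul, mul_inv_cancel₀ ht, one_smul]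
  continuous_toFun := continuous_const_smul t
  continuous_invFun := continuous_const_smul t⁻¹

@[simp] lemma sCLE_apply {E : Type*} [NormedAddCommGroup E] [NormedSpace ℝ E]
    {t : ℝ} (ht : t ≠ 0) (z : E) : sCLE ht z = t • z := rfl

@[simp] lemma sCLE_symm_apply {E : Type*} [NormedAddCommGroup E] [NormedSpace ℝ E]
    {t : ℝ} (ht : t ≠ 0) (z : E) : (sCLE ht).symm z = t⁻¹ • z := rfl

lemma sCLE_opNorm_le {E : Type*} [NormedAddCommGroup E] [NormedSpace ℝ E]
    {t : ℝ} (ht : t ≠ 0) : ‖((sCLE ht : E ≃L[ℝ] E) : E →L[ℝ] E)‖ ≤ |t| := by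
  refine ContinuousLinearMap.opNorm_le_bound _ (abs_nonneg t) fun z => ?_
  show ‖t • z‖ ≤ |t| * ‖z‖
  rw [norm_smul, Real.norm_eq_abs]

lemma sCLE_symm_opNorm_le {E : Type*} [NormedAddCommGroup E] [NormedSpace ℝ E]
    {t : ℝ} (ht : t ≠ 0) : ‖(((sCLE ht : E ≃L[ℝ] E).symm) : E →L[ℝ] E)‖ ≤ |t⁻¹| := by
  refine ContinuousLinearMap.opNorm_le_bound _ (abs_nonneg _) fun z => ?_
  show ‖t⁻¹ • z‖ ≤ |t⁻¹| * ‖z‖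
  rw [norm_smul, Real.norm_eq_abs]

private lemma hasDerivAt_logpow_rpow (j : ℕ) (α : ℝ) {t : ℝ} (ht : 0 < t) :
    HasDerivAt (fun s : ℝ => (Real.log s) ^ j * s ^ α)
      (((j : ℝ) * (Real.log t) ^ (j - 1) + α * (Real.log t) ^ j) * t ^ (α - 1)) t := by
  have hlog : HasDerivAt Real.log t⁻¹ t := Real.hasDerivAt_log ht.ne'
  have h1 : HasDerivAt (fun s : ℝ => (Real.log s) ^ j)
      ((j : ℝ) * (Real.log t) ^ (j - 1) * t⁻¹) t := hlog.pow j
  have h2 : HasDerivAt (fun s : ℝ => s ^ α) (α * t ^ (α - 1)) t :=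
    Real.hasDerivAt_rpow_const (Or.inl ht.ne')
  have h := h1.fun_mul h2
  refine h.congr_deriv ?_
  have ht1 : t ^ (α - 1) = t ^ α * t⁻¹ := by
    rw [Real.rpow_sub ht, Real.rpow_one, div_eq_mul_inv]
  rw [ht1]; ring

private lemma iteratedDeriv_structure (k : ℕ) (γ₁ : ℝ) (n : ℕ) :
    ∃ c : ℕ → ℝ, (∀ j, k < j → c j = 0) ∧ ∀ t : ℝ, 0 < t →
      iteratedDeriv n (fun s : ℝ => (Real.log s) ^ k * s ^ γ₁) t
        = ∑ j ∈ Finset.range (k + 1), c j * ((Real.log t) ^ j * t ^ (γ₁ - n)) := by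
  induction n with
  | zero =>
    refine ⟨fun j => if j = k then 1 else 0, fun j hj => if_neg hj.ne', fun t ht => ?_⟩
    rw [iteratedDeriv_zero]
    rw [Finset.sum_eq_single k]
    · simp
    · intro j hj hjk; simp [hjk]
    · intro h; exact absurd (Finset.self_mem_range_succ k) h
  | succ n ih =>
    obtain ⟨c, hc0, hc⟩ := ih
    refine ⟨fun j => (γ₁ - n) * c j + ((j : ℝ) + 1) * c (j + 1), ?_, ?_⟩
    · intro j hj
      simp only [hc0 j hj, hc0 (j + 1) (hj.trans (Nat.lt_succ_self j))]; ring
    intro t ht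
    rw [iteratedDeriv_succ]
    have hev : iteratedDeriv n (fun s : ℝ => (Real.log s) ^ k * s ^ γ₁)
        =ᶠ[nhds t] fun s => ∑ j ∈ Finset.range (k + 1),
            c j * ((Real.log s) ^ j * s ^ (γ₁ - n)) := by
      filter_upwards [Ioi_mem_nhds ht] with s hs using hc s hs
    rw [hev.deriv_eq]
    have hd : HasDerivAt (fun s : ℝ => ∑ j ∈ Finset.range (k + 1),
        c j * ((Real.log s) ^ j * s ^ (γ₁ - n)))
        (∑ j ∈ Finset.range (k + 1),
          c j * ((((j : ℝ) * (Real.log t) ^ (j - 1) + (γ₁ - n) * (Real.log t) ^ j)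
            * t ^ (γ₁ - n - 1)))) t := by
      refine HasDerivAt.fun_sum fun j _ => ?_
      exact (hasDerivAt_logpow_rpow j (γ₁ - n) ht).const_mul (c j)
    rw [hd.deriv]
    have hexp : γ₁ - ((n : ℝ) + 1) = γ₁ - n - 1 := by ring
    push_cast
    rw [hexp]
    set X := Real.log t
    set T := t ^ (γ₁ - (n : ℝ) - 1) with hT
    set β := γ₁ - (n : ℝ) with hβ
    have split : ∀ j ∈ Finset.range (k + 1),
        c j * (((j : ℝ) * X ^ (j - 1) + β * X ^ j) * T)
          = c j * ((j : ℝ) * X ^ (j - 1)) * T + β * c j * (X ^ j * T) := by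
      intro j _; ring
    rw [Finset.sum_congr rfl split, Finset.sum_add_distrib]
    have hshift : ∑ j ∈ Finset.range (k + 1), c j * ((j : ℝ) * X ^ (j - 1)) * T
        = ∑ j ∈ Finset.range (k + 1), ((j : ℝ) + 1) * c (j + 1) * (X ^ j * T) := by
      rw [Finset.sum_range_succ' (fun j => c j * ((j : ℝ) * X ^ (j - 1)) * T) k,
        Finset.sum_range_succ (fun j => ((j : ℝ) + 1) * c (j + 1) * (X ^ j * T)) k]
      have h0 : c 0 * (((0 : ℕ) : ℝ) * X ^ (0 - 1)) * T = 0 := by simp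
      have hk : ((k : ℝ) + 1) * c (k + 1) * (X ^ k * T) = 0 := by
        rw [hc0 (k + 1) (Nat.lt_succ_self k)]; ring
      rw [h0, hk, add_zero, add_zero]
      refine Finset.sum_congr rfl fun j _ => ?_
      have : (j + 1) - 1 = j := by omega
      rw [this]
      push_cast
      ring
    rw [hshift, ← Finset.sum_add_distrib]
    refine Finset.sum_congr rfl fun j _ => ?_
    ring

private lemma onedim_bound (k : ℕ) {γ₁ γ : ℝ} (hγ₁ : 0 < γ₁) (hγ : γ = γ₁ / 2) (n : ℕ) :
    ∃ B : ℝ, ∀ t : ℝ, 0 < t → t ≤ 1 →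
      |iteratedDeriv n (fun s : ℝ => (Real.log s) ^ k * s ^ γ₁) t| ≤ B * t ^ (γ - n) := by
  obtain ⟨c, -, hc⟩ := iteratedDeriv_structure k γ₁ n
  have hγpos : 0 < γ := by rw [hγ]; linarith
  set ε : ℝ := γ / (k + 1) with hε
  have hεpos : 0 < ε := by positivity
  refine ⟨∑ j ∈ Finset.range (k + 1), |c j| * ε⁻¹ ^ j, fun t ht ht1 => ?_⟩
  rw [hc t ht]
  calc |∑ j ∈ Finset.range (k + 1), c j * ((Real.log t) ^ j * t ^ (γ₁ - n))|
      ≤ ∑ j ∈ Finset.range (k + 1), |c j * ((Real.log t) ^ j * t ^ (γ₁ - n))| :=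
        Finset.abs_sum_le_sum_abs _ _
    _ ≤ ∑ j ∈ Finset.range (k + 1), |c j| * ε⁻¹ ^ j * t ^ (γ - n) := by
        refine Finset.sum_le_sum fun j hj => ?_
        have hj' : j ≤ k := Nat.lt_succ_iff.mp (Finset.mem_range.mp hj)
        have hlog : |Real.log t| ≤ ε⁻¹ * t ^ (-ε) := by
          rw [abs_of_nonpos (Real.log_nonpos ht.le ht1)]
          have h := Real.log_le_rpow_div (le_of_lt (inv_pos.2 ht)) hεpos
          rw [Real.log_inv] at h
          calc -Real.log t ≤ (t⁻¹) ^ ε / ε := h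
            _ = ε⁻¹ * t ^ (-ε) := by
                rw [div_eq_mul_inv, mul_comm, Real.inv_rpow ht.le,
                  ← Real.rpow_neg ht.le]
        have htp : (0:ℝ) < t ^ (γ₁ - (n:ℝ)) := Real.rpow_pos_of_pos ht _
        rw [abs_mul, abs_mul, abs_pow, abs_of_pos htp]
        have h1 : |Real.log t| ^ j ≤ ε⁻¹ ^ j * t ^ (-ε * j) := by
          calc |Real.log t| ^ j ≤ (ε⁻¹ * t ^ (-ε)) ^ j :=
                pow_le_pow_left₀ (abs_nonneg _) hlog j
            _ = ε⁻¹ ^ j * (t ^ (-ε)) ^ j := mul_pow _ _ j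
            _ = ε⁻¹ ^ j * t ^ (-ε * j) := by
                rw [← Real.rpow_natCast (t ^ (-ε)) j, ← Real.rpow_mul ht.le]
        have h2 : t ^ (-ε * (j:ℝ)) * t ^ (γ₁ - (n:ℝ)) = t ^ (γ - ε * j) * t ^ (γ - (n:ℝ)) := by
          rw [← Real.rpow_add ht, ← Real.rpow_add ht]
          congr 1
          rw [hγ]; ring
        have hjle : ε * (j:ℝ) ≤ γ := by
          have hεk : ε * ((k:ℝ) + 1) = γ := by
            rw [hε]; field_simp
          have hjk : (j:ℝ) ≤ (k:ℝ) := by exact_mod_cast hj'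
          nlinarith [hεpos.le]
        have h3 : t ^ (γ - ε * j) ≤ 1 :=
          Real.rpow_le_one ht.le ht1 (by linarith)
        calc |c j| * (|Real.log t| ^ j * t ^ (γ₁ - (n:ℝ)))
            = |c j| * |Real.log t| ^ j * t ^ (γ₁ - (n:ℝ)) := by ring
          _ ≤ |c j| * (ε⁻¹ ^ j * t ^ (-ε * j)) * t ^ (γ₁ - (n:ℝ)) := by
              gcongr
          _ = |c j| * ε⁻¹ ^ j * (t ^ (-ε * (j:ℝ)) * t ^ (γ₁ - (n:ℝ))) := by ring
          _ = |c j| * ε⁻¹ ^ j * (t ^ (γ - ε * j) * t ^ (γ - (n:ℝ))) := by rw [h2]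
          _ ≤ |c j| * ε⁻¹ ^ j * (1 * t ^ (γ - (n:ℝ))) := by
              gcongr
          _ = |c j| * ε⁻¹ ^ j * t ^ (γ - (n:ℝ)) := by ring
    _ = (∑ j ∈ Finset.range (k + 1), |c j| * ε⁻¹ ^ j) * t ^ (γ - n) := by
        rw [Finset.sum_mul]

/-- Radial case of the third bound of (C-singamma): `u(x) = (log ‖x‖)^k ‖x‖^{γ₁}` is
smooth away from the origin and its `m`-th derivative satisfies
`‖D^m u(x)‖ ≤ C ‖x‖^{γ-m}` for `0 < ‖x‖ ≤ 1`, where `γ = γ₁/2`. -/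
theorem stmt_4 (d : ℕ) (hd : 1 ≤ d) (k : ℕ) (γ₁ : ℝ) (hγ₁ : 0 < γ₁)
    (γ : ℝ) (hγ : γ = γ₁ / 2) (m : ℕ)
    (u : EuclideanSpace ℝ (Fin d) → ℝ)
    (hu : ∀ x : EuclideanSpace ℝ (Fin d), x ≠ 0 → u x = (Real.log ‖x‖) ^ k * ‖x‖ ^ γ₁) :
    ContDiffOn ℝ (⊤ : ℕ∞) u {(0 : EuclideanSpace ℝ (Fin d))}ᶜ ∧
    ∃ C : ℝ, 0 < C ∧ ∀ x : EuclideanSpace ℝ (Fin d), 0 < ‖x‖ → ‖x‖ ≤ 1 →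
      ‖iteratedFDeriv ℝ m u x‖ ≤ C * ‖x‖ ^ (γ - m) := by
  classical
  have hopen : IsOpen ({(0 : (EuclideanSpace ℝ (Fin d)))}ᶜ : Set (EuclideanSpace ℝ (Fin d))) := isOpen_compl_singleton
  have hgat : ∀ r : ℝ, r ≠ 0 → ContDiffAt ℝ (⊤ : ℕ∞) (fun s : ℝ => (Real.log s) ^ k * s ^ γ₁) r :=
    fun r hr => ((Real.contDiffAt_log.2 hr).pow k).mul (Real.contDiffAt_rpow_const_of_ne hr)
  have hfsmooth : ∀ x : (EuclideanSpace ℝ (Fin d)), x ≠ 0 →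
      ContDiffAt ℝ (⊤ : ℕ∞) (fun y : (EuclideanSpace ℝ (Fin d)) => (Real.log ‖y‖) ^ k * ‖y‖ ^ γ₁) x := by
    intro x hx
    have hN : ContDiffAt ℝ (⊤ : ℕ∞) (fun y : (EuclideanSpace ℝ (Fin d)) => ‖y‖) x := contDiffAt_norm ℝ hx
    exact (hgat ‖x‖ (norm_ne_zero_iff.2 hx)).comp x hN
  have hufev : ∀ x : (EuclideanSpace ℝ (Fin d)), x ≠ 0 →
      u =ᶠ[nhds x] fun y : (EuclideanSpace ℝ (Fin d)) => (Real.log ‖y‖) ^ k * ‖y‖ ^ γ₁ := by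
    intro x hx
    filter_upwards [hopen.mem_nhds hx] with y hy
    exact hu y hy
  constructor
  · intro x hx
    have hx' : x ≠ 0 := Set.mem_compl_singleton_iff.mp hx
    exact ((hfsmooth x hx').congr_of_eventuallyEq (hufev x hx')).contDiffWithinAt
  -- one-dimensional derivative bounds
  choose B hB using fun i => onedim_bound k hγ₁ hγ i
  set Bm : ℝ := 1 + ∑ i ∈ Finset.range (m + 1), |B i| with hBmdef
  have hsumB : 0 ≤ ∑ i ∈ Finset.range (m + 1), |B i| :=
    Finset.sum_nonneg fun i _ => abs_nonneg _
  have hBm1 : 1 ≤ Bm := by rw [hBmdef]; linarith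
  have hBmi : ∀ i, i ≤ m → B i ≤ Bm := by
    intro i hi
    have h1 : |B i| ≤ ∑ j ∈ Finset.range (m + 1), |B j| :=
      Finset.single_le_sum (fun j _ => abs_nonneg (B j))
        (Finset.mem_range.2 (Nat.lt_succ_of_le hi))
    calc B i ≤ |B i| := le_abs_self _
      _ ≤ Bm := by rw [hBmdef]; linarith
  -- bounds for the derivatives of the norm on the unit sphere
  have hNsm : ContDiffOn ℝ (⊤ : ℕ∞) (fun y : (EuclideanSpace ℝ (Fin d)) => ‖y‖) {0}ᶜ :=
    fun x hx => (contDiffAt_norm ℝ (Set.mem_compl_singleton_iff.mp hx)).contDiffWithinAt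
  have hKex : ∀ i : ℕ, ∃ Ki : ℝ, ∀ y ∈ Metric.sphere (0 : (EuclideanSpace ℝ (Fin d))) 1,
      ‖iteratedFDeriv ℝ i (fun y : (EuclideanSpace ℝ (Fin d)) => ‖y‖) y‖ ≤ Ki := by
    intro i
    apply (isCompact_sphere (0 : (EuclideanSpace ℝ (Fin d))) 1).exists_bound_of_continuousOn
    have h1 : ContinuousOn (iteratedFDerivWithin ℝ i (fun y : (EuclideanSpace ℝ (Fin d)) => ‖y‖) {0}ᶜ) {0}ᶜ :=
      hNsm.continuousOn_iteratedFDerivWithin (by exact_mod_cast le_top) hopen.uniqueDiffOn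
    have h2 : ContinuousOn (iteratedFDeriv ℝ i (fun y : (EuclideanSpace ℝ (Fin d)) => ‖y‖)) {0}ᶜ :=
      h1.congr fun y hy => ((iteratedFDerivWithin_of_isOpen i hopen) hy).symm
    refine h2.mono fun y hy => ?_
    have h3 : ‖y‖ = 1 := mem_sphere_zero_iff_norm.mp hy
    simp only [Set.mem_compl_singleton_iff]
    intro h
    rw [h] at h3; simp at h3
  choose K hK using hKex
  set D : ℝ := 1 + ∑ i ∈ Finset.range (m + 1), |K i| with hDdef
  have hsumK : 0 ≤ ∑ i ∈ Finset.range (m + 1), |K i| :=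
    Finset.sum_nonneg fun i _ => abs_nonneg _
  have hD1 : 1 ≤ D := by rw [hDdef]; linarith
  have hDi : ∀ i, i ≤ m → K i ≤ D := by
    intro i hi
    have h1 : |K i| ≤ ∑ j ∈ Finset.range (m + 1), |K j| :=
      Finset.single_le_sum (fun j _ => abs_nonneg (K j))
        (Finset.mem_range.2 (Nat.lt_succ_of_le hi))
    calc K i ≤ |K i| := le_abs_self _
      _ ≤ D := by rw [hDdef]; linarith
  have hBmpos : 0 < Bm := lt_of_lt_of_le one_pos hBm1
  have hDpos : 0 < D := lt_of_lt_of_le one_pos hD1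
  refine ⟨(m.factorial : ℝ) * Bm * D ^ m, by positivity, ?_⟩
  intro x hx0 hx1
  set t : ℝ := ‖x‖ with htdef
  have ht : 0 < t := hx0
  have htne : t ≠ 0 := ht.ne'
  have hxne : x ≠ 0 := norm_pos_iff.mp hx0
  -- replace u by the explicit function
  have hiter : iteratedFDeriv ℝ m u x
      = iteratedFDeriv ℝ m (fun y : (EuclideanSpace ℝ (Fin d)) => (Real.log ‖y‖) ^ k * ‖y‖ ^ γ₁) x := by
    have h := hufev x hxne
    simp only [← iteratedFDerivWithin_univ]
    exact Filter.EventuallyEq.iteratedFDerivWithin_eq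
      (by simpa [nhdsWithin_univ] using h) h.self_of_nhds m
  rw [hiter]
  have hy1 : ‖t⁻¹ • x‖ = 1 := by
    rw [norm_smul, Real.norm_eq_abs, abs_of_pos (inv_pos.2 ht), ← htdef]
    field_simp
  set V : Set (EuclideanSpace ℝ (Fin d)) := {z : (EuclideanSpace ℝ (Fin d)) | (1:ℝ)/2 < ‖z‖} with hVdef
  have hVopen : IsOpen V := isOpen_lt continuous_const continuous_norm
  have hyV : t⁻¹ • x ∈ V := by
    show (1:ℝ)/2 < ‖t⁻¹ • x‖
    rw [hy1]; norm_num
  have hVsub : V ⊆ ({0}ᶜ : Set (EuclideanSpace ℝ (Fin d))) := by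
    intro z hz
    have hz' : (1:ℝ)/2 < ‖z‖ := hz
    simp only [Set.mem_compl_singleton_iff]
    intro h
    rw [h] at hz'; simp at hz'; linarith
  have hesymm : (sCLE htne (E := EuclideanSpace ℝ (Fin d))).symm x = t⁻¹ • x := rfl
  have hWopen : IsOpen (⇑(sCLE htne (E := EuclideanSpace ℝ (Fin d))).symm ⁻¹' V) :=
    hVopen.preimage (sCLE htne (E := EuclideanSpace ℝ (Fin d))).symm.continuous
  have hxW : x ∈ ⇑(sCLE htne (E := EuclideanSpace ℝ (Fin d))).symm ⁻¹' V := by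
    simp only [Set.mem_preimage, hesymm]
    exact hyV
  have hcomp : ((fun y : (EuclideanSpace ℝ (Fin d)) => (Real.log ‖y‖) ^ k * ‖y‖ ^ γ₁) ∘ ⇑(sCLE htne (E := EuclideanSpace ℝ (Fin d))))
      ∘ ⇑(sCLE htne (E := EuclideanSpace ℝ (Fin d))).symm = fun y : (EuclideanSpace ℝ (Fin d)) => (Real.log ‖y‖) ^ k * ‖y‖ ^ γ₁ := by
    funext z
    simp only [Function.comp_apply, sCLE_apply, sCLE_symm_apply]
    rw [smul_smul, mul_inv_cancel₀ htne, one_smul]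
  -- step 1: pass to the rescaled function at the unit-sphere point
  have key1 : ‖iteratedFDeriv ℝ m (fun y : (EuclideanSpace ℝ (Fin d)) => (Real.log ‖y‖) ^ k * ‖y‖ ^ γ₁) x‖
      ≤ ‖iteratedFDerivWithin ℝ m
          ((fun y : (EuclideanSpace ℝ (Fin d)) => (Real.log ‖y‖) ^ k * ‖y‖ ^ γ₁) ∘ ⇑(sCLE htne (E := EuclideanSpace ℝ (Fin d)))) V
          (t⁻¹ • x)‖ * t⁻¹ ^ m := by
    have h1 : iteratedFDeriv ℝ m (fun y : (EuclideanSpace ℝ (Fin d)) => (Real.log ‖y‖) ^ k * ‖y‖ ^ γ₁) x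
        = iteratedFDerivWithin ℝ m (fun y : (EuclideanSpace ℝ (Fin d)) => (Real.log ‖y‖) ^ k * ‖y‖ ^ γ₁)
            (⇑(sCLE htne (E := EuclideanSpace ℝ (Fin d))).symm ⁻¹' V) x :=
      ((iteratedFDerivWithin_of_isOpen m hWopen) hxW).symm
    have h3 := ContinuousLinearEquiv.iteratedFDerivWithin_comp_right
      (sCLE htne (E := EuclideanSpace ℝ (Fin d))).symm
      ((fun y : (EuclideanSpace ℝ (Fin d)) => (Real.log ‖y‖) ^ k * ‖y‖ ^ γ₁) ∘ ⇑(sCLE htne (E := EuclideanSpace ℝ (Fin d))))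
      hVopen.uniqueDiffOn (x := x) (by rw [hesymm]; exact hyV) m
    rw [hcomp] at h3
    rw [h1, h3, hesymm]
    refine le_trans (ContinuousMultilinearMap.norm_compContinuousLinearMap_le _ _) ?_
    have hprod : (∏ _i : Fin m, ‖((sCLE htne (E := EuclideanSpace ℝ (Fin d))).symm : (EuclideanSpace ℝ (Fin d)) →L[ℝ] (EuclideanSpace ℝ (Fin d)))‖)
        = ‖((sCLE htne (E := EuclideanSpace ℝ (Fin d))).symm : (EuclideanSpace ℝ (Fin d)) →L[ℝ] (EuclideanSpace ℝ (Fin d)))‖ ^ m := by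
      rw [Finset.prod_const, Finset.card_univ, Fintype.card_fin]
    rw [hprod]
    have hle : ‖((sCLE htne (E := EuclideanSpace ℝ (Fin d))).symm : (EuclideanSpace ℝ (Fin d)) →L[ℝ] (EuclideanSpace ℝ (Fin d)))‖ ≤ t⁻¹ :=
      le_trans (sCLE_symm_opNorm_le htne) (le_of_eq (abs_of_pos (inv_pos.2 ht)))
    exact mul_le_mul_of_nonneg_left (pow_le_pow_left₀ (norm_nonneg _) hle m) (norm_nonneg _)
  -- step 2: rewrite the rescaled function as a composition with the norm
  have hfeGN : (fun y : (EuclideanSpace ℝ (Fin d)) => (Real.log ‖y‖) ^ k * ‖y‖ ^ γ₁) ∘ ⇑(sCLE htne (E := EuclideanSpace ℝ (Fin d)))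
      = (fun s : ℝ => (Real.log (t * s)) ^ k * (t * s) ^ γ₁) ∘ (fun z : (EuclideanSpace ℝ (Fin d)) => ‖z‖) := by
    funext z
    simp only [Function.comp_apply, sCLE_apply]
    rw [norm_smul, Real.norm_eq_abs, abs_of_pos ht]
  -- step 3: smoothness of the pieces
  have hG : ContDiffOn ℝ (⊤ : ℕ∞) (fun s : ℝ => (Real.log (t * s)) ^ k * (t * s) ^ γ₁)
      (Set.Ioi (0:ℝ)) := by
    intro s hs
    have hs' : (0:ℝ) < s := hs
    have hts : t * s ≠ 0 := (mul_pos ht hs').ne'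
    have h1 : ContDiffAt ℝ (⊤ : ℕ∞) (fun s : ℝ => t * s) s := (contDiff_const.mul contDiff_id).contDiffAt
    have := (hgat (t * s) hts).comp s h1
    exact this.contDiffWithinAt
  have hNV : ContDiffOn ℝ (⊤ : ℕ∞) (fun z : (EuclideanSpace ℝ (Fin d)) => ‖z‖) V := hNsm.mono hVsub
  have hmap : Set.MapsTo (fun z : (EuclideanSpace ℝ (Fin d)) => ‖z‖) V (Set.Ioi (0:ℝ)) := by
    intro z hz
    have hz' : (1:ℝ)/2 < ‖z‖ := hz
    simp only [Set.mem_Ioi]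
    linarith
  -- step 4: bounds for the derivatives of the rescaled 1D function
  have hC : ∀ i, i ≤ m →
      ‖iteratedFDerivWithin ℝ i (fun s : ℝ => (Real.log (t * s)) ^ k * (t * s) ^ γ₁)
        (Set.Ioi (0:ℝ)) ((fun z : (EuclideanSpace ℝ (Fin d)) => ‖z‖) (t⁻¹ • x))‖ ≤ Bm * t ^ γ := by
    intro i hi
    have hNy : (fun z : (EuclideanSpace ℝ (Fin d)) => ‖z‖) (t⁻¹ • x) = 1 := hy1
    rw [hNy]
    have hGe : (fun s : ℝ => (Real.log (t * s)) ^ k * (t * s) ^ γ₁)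
        = (fun s : ℝ => (Real.log s) ^ k * s ^ γ₁) ∘ ⇑(sCLE htne (E := ℝ)) := by
      funext s
      simp only [Function.comp_apply, sCLE_apply, smul_eq_mul]
    have hpre : ⇑(sCLE htne (E := ℝ)) ⁻¹' (Set.Ioi (0:ℝ)) = Set.Ioi (0:ℝ) := by
      ext s
      simp only [Set.mem_preimage, Set.mem_Ioi, sCLE_apply, smul_eq_mul]
      constructor
      · intro h; nlinarith
      · intro h; exact mul_pos ht h
    have he₂1 : (sCLE htne (E := ℝ)) 1 = t := by
      simp only [sCLE_apply, smul_eq_mul, mul_one]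
    have key := ContinuousLinearEquiv.iteratedFDerivWithin_comp_right
      (sCLE htne (E := ℝ)) (fun s : ℝ => (Real.log s) ^ k * s ^ γ₁)
      (uniqueDiffOn_Ioi (0:ℝ)) (x := 1) (by rw [he₂1]; exact Set.mem_Ioi.2 ht) i
    rw [hpre, he₂1] at key
    rw [hGe, key]
    refine le_trans (ContinuousMultilinearMap.norm_compContinuousLinearMap_le _ _) ?_
    have hprod : (∏ _i : Fin i, ‖((sCLE htne (E := ℝ)) : ℝ →L[ℝ] ℝ)‖)
        = ‖((sCLE htne (E := ℝ)) : ℝ →L[ℝ] ℝ)‖ ^ i := by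
      rw [Finset.prod_const, Finset.card_univ, Fintype.card_fin]
    rw [hprod]
    have hwithin : iteratedFDerivWithin ℝ i (fun s : ℝ => (Real.log s) ^ k * s ^ γ₁)
        (Set.Ioi (0:ℝ)) t = iteratedFDeriv ℝ i (fun s : ℝ => (Real.log s) ^ k * s ^ γ₁) t :=
      (iteratedFDerivWithin_of_isOpen i isOpen_Ioi) (Set.mem_Ioi.2 ht)
    rw [hwithin]
    have h1d : ‖iteratedFDeriv ℝ i (fun s : ℝ => (Real.log s) ^ k * s ^ γ₁) t‖
        ≤ B i * t ^ (γ - i) := by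
      rw [norm_iteratedFDeriv_eq_norm_iteratedDeriv, Real.norm_eq_abs]
      exact hB i t ht hx1
    have hopn : ‖((sCLE htne (E := ℝ)) : ℝ →L[ℝ] ℝ)‖ ≤ t :=
      le_trans (sCLE_opNorm_le htne) (le_of_eq (abs_of_pos ht))
    calc ‖iteratedFDeriv ℝ i (fun s : ℝ => (Real.log s) ^ k * s ^ γ₁) t‖
          * ‖((sCLE htne (E := ℝ)) : ℝ →L[ℝ] ℝ)‖ ^ i
        ≤ (B i * t ^ (γ - i)) * t ^ i := by
          refine mul_le_mul h1d (pow_le_pow_left₀ (norm_nonneg _) hopn i)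
            (pow_nonneg (norm_nonneg _) i) (le_trans (norm_nonneg _) h1d)
      _ = B i * t ^ γ := by
          rw [mul_assoc, ← Real.rpow_natCast t i, ← Real.rpow_add ht]
          congr 2
          ring
      _ ≤ Bm * t ^ γ := by
          exact mul_le_mul_of_nonneg_right (hBmi i hi) (Real.rpow_pos_of_pos ht γ).le
  -- step 5: bounds for the derivatives of the norm at the unit-sphere point
  have hD' : ∀ i, 1 ≤ i → i ≤ m →
      ‖iteratedFDerivWithin ℝ i (fun z : (EuclideanSpace ℝ (Fin d)) => ‖z‖) V (t⁻¹ • x)‖ ≤ D ^ i := by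
    intro i h1i him
    rw [(iteratedFDerivWithin_of_isOpen i hVopen) hyV]
    calc ‖iteratedFDeriv ℝ i (fun z : (EuclideanSpace ℝ (Fin d)) => ‖z‖) (t⁻¹ • x)‖ ≤ K i :=
          hK i (t⁻¹ • x) (mem_sphere_zero_iff_norm.mpr hy1)
      _ ≤ D := hDi i him
      _ ≤ D ^ i := le_self_pow₀ hD1 (Nat.one_le_iff_ne_zero.mp h1i)
  -- step 6: Faà di Bruno bound for the composition
  have hmain : ‖iteratedFDerivWithin ℝ m
      ((fun s : ℝ => (Real.log (t * s)) ^ k * (t * s) ^ γ₁) ∘ (fun z : (EuclideanSpace ℝ (Fin d)) => ‖z‖)) V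
      (t⁻¹ • x)‖ ≤ (m.factorial : ℝ) * (Bm * t ^ γ) * D ^ m :=
    norm_iteratedFDerivWithin_comp_le hG hNV (by exact_mod_cast le_top) (uniqueDiffOn_Ioi (0:ℝ))
      hVopen.uniqueDiffOn hmap hyV hC hD'
  -- conclusion
  have hpowinv : (t⁻¹) ^ m = t ^ (-(m:ℝ)) := by
    rw [inv_pow, ← Real.rpow_natCast t m, ← Real.rpow_neg ht.le]
  have hcombine : t ^ γ * t ^ (-(m:ℝ)) = t ^ (γ - (m:ℝ)) := by
    rw [← Real.rpow_add ht, sub_eq_add_neg]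
  calc ‖iteratedFDeriv ℝ m (fun y : (EuclideanSpace ℝ (Fin d)) => (Real.log ‖y‖) ^ k * ‖y‖ ^ γ₁) x‖
      ≤ ‖iteratedFDerivWithin ℝ m
          ((fun y : (EuclideanSpace ℝ (Fin d)) => (Real.log ‖y‖) ^ k * ‖y‖ ^ γ₁) ∘ ⇑(sCLE htne (E := EuclideanSpace ℝ (Fin d)))) V
          (t⁻¹ • x)‖ * t⁻¹ ^ m := key1
    _ = ‖iteratedFDerivWithin ℝ m
          ((fun s : ℝ => (Real.log (t * s)) ^ k * (t * s) ^ γ₁) ∘ (fun z : (EuclideanSpace ℝ (Fin d)) => ‖z‖)) V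
          (t⁻¹ • x)‖ * t⁻¹ ^ m := by rw [hfeGN]
    _ ≤ ((m.factorial : ℝ) * (Bm * t ^ γ) * D ^ m) * t⁻¹ ^ m :=
        mul_le_mul_of_nonneg_right hmain (pow_nonneg (inv_nonneg.2 ht.le) m)
    _ = ((m.factorial : ℝ) * Bm * D ^ m) * (t ^ γ * t ^ (-(m:ℝ))) := by
        rw [hpowinv]; ring
    _ = ((m.factorial : ℝ) * Bm * D ^ m) * t ^ (γ - (m:ℝ)) := by rw [hcombine]
end

section
/- Let γ > 0 and define u : ℂ → ℝ by u(z) = Im(z^γ), where z^γ denotes the principal branch of the complex power (Complex.cpow). Then u is differentiable at every point of the slit plane ℂ \ (−∞, 0], with ‖fderiv ℝ u z‖ = γ · |z|^{γ−1} for every z in the slit plane, and for every h > 0 the Dirichlet integral satisfies ∫_{B(0,h)} ‖fderiv ℝ u z‖² dz = π γ h^{2γ}, where B(0,h) ⊂ ℂ ≅ ℝ² is the open disk of radius h with two-dimensional Lebesgue measure. -/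
/-!
On the slit plane `z ↦ z^γ` is holomorphic, so `Du(z)` is the real functional
`w ↦ Im(w f'(z)) = ⟪i conj f'(z), w⟫` with `f'(z) = γ z^{γ-1}`; its norm is `|f'(z)| = γ|z|^{γ-1}`.
The slit has measure zero, so the Dirichlet integral is the radial integral
`2π ∫₀ʰ γ² r^{2γ-2} r dr = π γ h^{2γ}`.
-/

open MeasureTheory Metric Set Module ComplexConjugate

theorem HasDerivAt.hasFDerivAt_im {f : ℂ → ℂ} {f' z : ℂ} (hf : HasDerivAt f f' z) :
    HasFDerivAt (fun w => (f w).im) (innerSL ℝ (Complex.I * conj f')) z := by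
  refine (Complex.imCLM.hasFDerivAt.comp z (hf.hasFDerivAt.restrictScalars ℝ)).congr_fderiv ?_
  ext w
  simp only [ContinuousLinearMap.comp_apply, ContinuousLinearMap.coe_restrictScalars',
    ContinuousLinearMap.toSpanSingleton_apply, Complex.imCLM_apply, coe_innerSL_apply,
    Complex.inner, map_mul, Complex.conj_I, Complex.conj_conj, smul_eq_mul]
  rw [mul_left_comm, neg_mul, Complex.neg_re, Complex.I_mul_re, neg_neg]

theorem HasDerivAt.norm_fderiv_im {f : ℂ → ℂ} {f' z : ℂ} (hf : HasDerivAt f f' z) :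
    ‖fderiv ℝ (fun w => (f w).im) z‖ = ‖f'‖ := by
  simp [hf.hasFDerivAt_im.fderiv, innerSL_apply_norm]

theorem Complex.norm_ofReal_mul_cpow_ofReal_sub_one {γ : ℝ} (hγ : 0 ≤ γ) (z : ℂ) :
    ‖(γ : ℂ) * z ^ ((γ : ℂ) - 1)‖ = γ * ‖z‖ ^ (γ - 1) := by
  rw [← ofReal_one, ← ofReal_sub, norm_mul, norm_real, Real.norm_of_nonneg hγ, norm_cpow_real]

theorem Complex.ae_mem_slitPlane : ∀ᵐ z : ℂ, z ∈ slitPlane := by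
  have hker : LinearMap.ker imLm ≠ ⊤ := fun h => by
    simpa using LinearMap.congr_fun (LinearMap.ker_eq_top.mp h) I
  refine measure_mono_null (fun z hz => ?_) (Measure.addHaar_submodule volume _ hker)
  simp_all [mem_slitPlane_iff]

section Radial

variable {E : Type*} [NormedAddCommGroup E] [NormedSpace ℝ E] [FiniteDimensional ℝ E]
  [Nontrivial E] [MeasurableSpace E] [BorelSpace E]

theorem setIntegral_ball_norm_rpow (μ : Measure E) [μ.IsAddHaarMeasure] {p h : ℝ}
    (hp : -(finrank ℝ E : ℝ) < p) (hh : 0 ≤ h) :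
    ∫ x in ball 0 h, ‖x‖ ^ p ∂μ =
      finrank ℝ E * μ.real (ball 0 1) * (h ^ (p + finrank ℝ E) / (p + finrank ℝ E)) := by
  have hball : (ball 0 h).indicator (‖·‖ ^ p) = fun x : E => (Iio h).indicator (· ^ p) ‖x‖ := by
    ext x
    simp [indicator]
  have hradial : ∫ y in Ioi (0 : ℝ), y ^ (finrank ℝ E - 1) • (Iio h).indicator (· ^ p) y
      = ∫ y in (0 : ℝ)..h, y ^ (p + finrank ℝ E - 1) := by
    rw [intervalIntegral.integral_of_le hh, integral_Ioc_eq_integral_Ioo, ← Ioi_inter_Iio,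
      ← setIntegral_indicator measurableSet_Iio]
    refine setIntegral_congr_fun measurableSet_Ioi fun y (hy : 0 < y) => ?_
    by_cases hyh : y < h
    · simp only [indicator_of_mem (mem_Iio.2 hyh), smul_eq_mul, ← Real.rpow_natCast,
        ← Real.rpow_add hy, Nat.cast_sub finrank_pos]
      ring_nf
    · simp [hyh]
  rw [← integral_indicator measurableSet_ball, hball, integral_fun_norm_addHaar μ, hradial,
    integral_rpow (Or.inl (by linarith)), sub_add_cancel, Real.zero_rpow (by linarith)]
  simp only [nsmul_eq_mul, smul_eq_mul, sub_zero]
  ring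

end Radial

theorem Complex.setIntegral_ball_norm_rpow {p h : ℝ} (hp : -2 < p) (hh : 0 ≤ h) :
    ∫ z in ball (0 : ℂ) h, ‖z‖ ^ p = 2 * Real.pi * h ^ (p + 2) / (p + 2) := by
  rw [_root_.setIntegral_ball_norm_rpow volume (by simpa using hp) hh, finrank_real_complex,
    measureReal_def, volume_ball]
  simp only [Nat.cast_ofNat, ENNReal.ofReal_one, one_pow, one_mul, ENNReal.coe_toReal,
    NNReal.coe_real_pi]
  ring

/-- The model corner singularity `u(z) = Im(z^γ) = r^γ sin(γθ)`: it is real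
differentiable on the slit plane with `‖Du(z)‖ = γ |z|^{γ-1}`, and its Dirichlet
integral over the disk of radius `h` equals `π γ h^{2γ}`. -/
theorem stmt_10 (γ : ℝ) (hγ : 0 < γ) (u : ℂ → ℝ)
    (hu : ∀ z : ℂ, u z = (z ^ (γ : ℂ)).im) :
    (∀ z ∈ Complex.slitPlane, DifferentiableAt ℝ u z) ∧
    (∀ z ∈ Complex.slitPlane, ‖fderiv ℝ u z‖ = γ * ‖z‖ ^ (γ - 1)) ∧
    ∀ h : ℝ, 0 < h →
      (∫ z in Metric.ball (0 : ℂ) h, ‖fderiv ℝ u z‖ ^ 2) =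
        Real.pi * γ * h ^ (2 * γ) := by
  obtain rfl : u = fun z => (z ^ (γ : ℂ)).im := funext hu
  have hderiv : ∀ z ∈ Complex.slitPlane,
      HasDerivAt (· ^ (γ : ℂ)) ((γ : ℂ) * z ^ ((γ : ℂ) - 1)) z :=
    fun z hz => (Complex.hasStrictDerivAt_cpow_const hz).hasDerivAt
  have hnorm : ∀ z ∈ Complex.slitPlane,
      ‖fderiv ℝ (fun z => (z ^ (γ : ℂ)).im) z‖ = γ * ‖z‖ ^ (γ - 1) := fun z hz => by
    rw [(hderiv z hz).norm_fderiv_im, Complex.norm_ofReal_mul_cpow_ofReal_sub_one hγ.le]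
  refine ⟨fun z hz => (hderiv z hz).hasFDerivAt_im.differentiableAt, hnorm, fun h hh => ?_⟩
  calc _ = ∫ z in ball (0 : ℂ) h, γ ^ 2 * ‖z‖ ^ (2 * γ - 2) := by
        refine setIntegral_congr_ae measurableSet_ball ?_
        filter_upwards [Complex.ae_mem_slitPlane] with z hz _
        rw [hnorm z hz, mul_pow, ← Real.rpow_mul_natCast (norm_nonneg z)]
        ring_nf
    _ = γ ^ 2 * (2 * Real.pi * h ^ (2 * γ - 2 + 2) / (2 * γ - 2 + 2)) := by
        rw [integral_const_mul, Complex.setIntegral_ball_norm_rpow (by linarith) hh.le]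
    _ = Real.pi * γ * h ^ (2 * γ) := by
        rw [sub_add_cancel]
        field_simp
end

section
/- Let γ, ρ, σ, a₁, a₂ be real numbers with a₁, a₂ ≠ 0 and set R := a₁/a₂. Define the four branch functions μ₁(θ) = cos((π/2−σ)γ)·cos((θ−π/2+ρ)γ), μ₂(θ) = cos(ργ)·cos((θ−π+σ)γ), μ₃(θ) = cos(σγ)·cos((θ−π−ρ)γ), μ₄(θ) = cos((π/2−ρ)γ)·cos((θ−3π/2−σ)γ). Then: (i) unconditionally, μ₁(π/2) = μ₂(π/2), μ₂(π) = μ₃(π), μ₃(3π/2) = μ₄(3π/2), and μ₁(0) = μ₄(2π); and (ii) if cos(ργ), sin(ργ), cos(σγ), sin(σγ), cos((π/2−σ)γ), sin((π/2−σ)γ), cos((π/2−ρ)γ), sin((π/2−ρ)γ) are all nonzero and the three relations R = −tan((π/2−σ)γ)·cot(ργ), 1/R = −tan(ργ)·cot(σγ), and R = −tan(σγ)·cot((π/2−ρ)γ) hold, then the flux transmission conditions hold: a₁·μ₁′(π/2) = a₂·μ₂′(π/2), a₂·μ₂′(π) = a₁·μ₃′(π), a₁·μ₃′(3π/2) = a₂·μ₄′(3π/2),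 and a₂·μ₄′(2π) = a₁·μ₁′(0), where μⱼ′ denotes the derivative with respect to θ. -/
/-!
Across each of the four interfaces the two adjacent branches have the shape
`cos x * cos ((θ - θ₀) γ + y)` and `cos y * cos ((θ - θ₁) γ - x)`, with `(x, y)` running through
`((π/2 - σ)γ, ργ)`, `(ργ, σγ)`, `(σγ, (π/2 - ρ)γ)` and `((π/2 - ρ)γ, (π/2 - σ)γ)`. Such a pair
always agrees at the interface, and its flux condition `a f' = b g'` is the relation
`a / b = -tan x cot y`. The first three relations are the hypotheses; the fourth is their
product, in which the factors `tan (ργ) cot (ργ)` and `tan (σγ) cot (σγ)` cancel.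
-/

open Real

lemma Real.tan_mul_cot_of_ne_zero {x : ℝ} (hs : sin x ≠ 0) (hc : cos x ≠ 0) :
    tan x * cot x = 1 := by
  rw [tan_eq_sin_div_cos, cot_eq_cos_div_sin]
  field_simp

namespace Kellogg

variable {f g : ℝ → ℝ} {a b c x y γ θ₀ θ₁ φ : ℝ}

lemma deriv_eq_of_forall_eq_mul_cos (hf : ∀ θ, f θ = c * cos ((θ - θ₀) * γ + φ)) :
    deriv f θ₀ = -(c * γ * sin φ) := by
  have hd := ((((hasDerivAt_id' θ₀).sub_const θ₀).mul_const γ).add_const φ).cos.const_mul c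
  rw [funext hf, hd.deriv]
  simp only [sub_self, zero_mul, zero_add, one_mul]
  ring

lemma interface_eq (hf : ∀ θ, f θ = cos x * cos ((θ - θ₀) * γ + y))
    (hg : ∀ θ, g θ = cos y * cos ((θ - θ₁) * γ - x)) : f θ₀ = g θ₁ := by
  rw [hf, hg, sub_self, sub_self, zero_mul, zero_add, zero_sub, cos_neg, mul_comm]

lemma interface_flux (hb : b ≠ 0) (hx : cos x ≠ 0) (hy : sin y ≠ 0)
    (h : a / b = -tan x * cot y)
    (hf : ∀ θ, f θ = cos x * cos ((θ - θ₀) * γ + y))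
    (hg : ∀ θ, g θ = cos y * cos ((θ - θ₁) * γ - x)) :
    a * deriv f θ₀ = b * deriv g θ₁ := by
  have hg' : ∀ θ, g θ = cos y * cos ((θ - θ₁) * γ + -x) := fun θ => by rw [hg, sub_eq_add_neg]
  rw [deriv_eq_of_forall_eq_mul_cos hf, deriv_eq_of_forall_eq_mul_cos hg', sin_neg]
  rw [tan_eq_sin_div_cos, cot_eq_cos_div_sin] at h
  field_simp at h
  linear_combination (-γ) * h

lemma one_div_eq_neg_tan_mul_cot_of_chain {R A B p s : ℝ} (hR : R ≠ 0)
    (hsp : sin p ≠ 0) (hcp : cos p ≠ 0) (hss : sin s ≠ 0) (hcs : cos s ≠ 0)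
    (h₁ : R = -tan A * cot p) (h₂ : 1 / R = -tan p * cot s) (h₃ : R = -tan s * cot B) :
    1 / R = -tan B * cot A := by
  have hAB : R = -tan A * cot B :=
    calc R = R * (1 / R) * R := by field_simp
      _ = -tan A * cot B * (tan p * cot p) * (tan s * cot s) := by
        rw [h₂]; nth_rw 1 [h₁]; rw [h₃]; ring
      _ = -tan A * cot B := by
        rw [tan_mul_cot_of_ne_zero hsp hcp, tan_mul_cot_of_ne_zero hss hcs]; ring
  rw [hAB, tan_eq_sin_div_cos, cot_eq_cos_div_sin, tan_eq_sin_div_cos, cot_eq_cos_div_sin,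
    one_div, neg_mul, inv_neg, mul_inv, inv_div, inv_div]
  ring

end Kellogg

open Kellogg in
/-- Kellogg's formulas (Section 3.2): the piecewise angular factor `μ` built from the four
branches `μ₁,…,μ₄` is continuous at the quadrant interfaces (i), and, under the nonlinear
relations among `γ, ρ, σ, R = a₁/a₂`, the flux transmission conditions
`aᵢ μⱼ′ = aⱼ μⱼ₊₁′` hold at the interfaces (ii). -/
theorem stmt_12 (γ ρ σ a₁ a₂ : ℝ) (ha₁ : a₁ ≠ 0) (ha₂ : a₂ ≠ 0)
    (R : ℝ) (hR : R = a₁ / a₂)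
    (μ₁ μ₂ μ₃ μ₄ : ℝ → ℝ)
    (hμ₁ : ∀ θ, μ₁ θ = cos ((π / 2 - σ) * γ) * cos ((θ - π / 2 + ρ) * γ))
    (hμ₂ : ∀ θ, μ₂ θ = cos (ρ * γ) * cos ((θ - π + σ) * γ))
    (hμ₃ : ∀ θ, μ₃ θ = cos (σ * γ) * cos ((θ - π - ρ) * γ))
    (hμ₄ : ∀ θ, μ₄ θ = cos ((π / 2 - ρ) * γ) * cos ((θ - 3 * π / 2 - σ) * γ)) :
    (μ₁ (π / 2) = μ₂ (π / 2) ∧ μ₂ π = μ₃ π ∧ μ₃ (3 * π / 2) = μ₄ (3 * π / 2) ∧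
      μ₁ 0 = μ₄ (2 * π)) ∧
    ((cos (ρ * γ) ≠ 0 → sin (ρ * γ) ≠ 0 → cos (σ * γ) ≠ 0 → sin (σ * γ) ≠ 0 →
      cos ((π / 2 - σ) * γ) ≠ 0 → sin ((π / 2 - σ) * γ) ≠ 0 →
      cos ((π / 2 - ρ) * γ) ≠ 0 → sin ((π / 2 - ρ) * γ) ≠ 0 →
      R = -tan ((π / 2 - σ) * γ) * Real.cot (ρ * γ) →
      1 / R = -tan (ρ * γ) * Real.cot (σ * γ) →
      R = -tan (σ * γ) * Real.cot ((π / 2 - ρ) * γ) →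
        a₁ * deriv μ₁ (π / 2) = a₂ * deriv μ₂ (π / 2) ∧
        a₂ * deriv μ₂ π = a₁ * deriv μ₃ π ∧
        a₁ * deriv μ₃ (3 * π / 2) = a₂ * deriv μ₄ (3 * π / 2) ∧
        a₂ * deriv μ₄ (2 * π) = a₁ * deriv μ₁ 0)) := by
  have hμ₁r : ∀ θ, μ₁ θ = cos ((π / 2 - σ) * γ) * cos ((θ - π / 2) * γ + ρ * γ) :=
    fun θ => by rw [hμ₁]; congr 2; ring
  have hμ₁l : ∀ θ, μ₁ θ = cos ((π / 2 - σ) * γ) * cos ((θ - 0) * γ - (π / 2 - ρ) * γ) :=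
    fun θ => by rw [hμ₁]; congr 2; ring
  have hμ₂l : ∀ θ, μ₂ θ = cos (ρ * γ) * cos ((θ - π / 2) * γ - (π / 2 - σ) * γ) :=
    fun θ => by rw [hμ₂]; congr 2; ring
  have hμ₂r : ∀ θ, μ₂ θ = cos (ρ * γ) * cos ((θ - π) * γ + σ * γ) :=
    fun θ => by rw [hμ₂]; congr 2; ring
  have hμ₃l : ∀ θ, μ₃ θ = cos (σ * γ) * cos ((θ - π) * γ - ρ * γ) :=
    fun θ => by rw [hμ₃]; congr 2; ring
  have hμ₃r : ∀ θ, μ₃ θ = cos (σ * γ) * cos ((θ - 3 * π / 2) * γ + (π / 2 - ρ) * γ) :=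
    fun θ => by rw [hμ₃]; congr 2; ring
  have hμ₄l : ∀ θ, μ₄ θ = cos ((π / 2 - ρ) * γ) * cos ((θ - 3 * π / 2) * γ - σ * γ) :=
    fun θ => by rw [hμ₄]; congr 2; ring
  have hμ₄r : ∀ θ, μ₄ θ = cos ((π / 2 - ρ) * γ) * cos ((θ - 2 * π) * γ + (π / 2 - σ) * γ) :=
    fun θ => by rw [hμ₄]; congr 2; ring
  refine ⟨⟨interface_eq hμ₁r hμ₂l, interface_eq hμ₂r hμ₃l, interface_eq hμ₃r hμ₄l,
    (interface_eq hμ₄r hμ₁l).symm⟩, fun hcp hsp hcs hss hcA hsA hcB hsB h₁ h₂ h₃ => ?_⟩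
  have h₄ := one_div_eq_neg_tan_mul_cot_of_chain (hR ▸ div_ne_zero ha₁ ha₂) hsp hcp hss hcs
    h₁ h₂ h₃
  rw [hR] at h₁ h₃
  rw [hR, one_div_div] at h₂ h₄
  exact ⟨interface_flux ha₂ hcA hsp h₁ hμ₁r hμ₂l, interface_flux ha₁ hcp hss h₂ hμ₂r hμ₃l,
    interface_flux ha₂ hcs hsB h₃ hμ₃r hμ₄l, interface_flux ha₁ hcB hsA h₄ hμ₄r hμ₁l⟩
end
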